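/- Let Λ be an Artinian algebra and let 0 → A →g B →f C → 0 be a non-split short exact sequence of finitely generated Λ-modules. If g is left minimal, then Ext¹_Λ(C', A) ≠ 0 for every non-zero direct summand C' of C. -/

import Mathlib

set_option synthInstance.maxHeartbeats 1000000
set_option maxHeartbeats 1000000
open CategoryTheory

namespace Paper

variable (Λ : Type) [Ring Λ]

/-- `extZero Λ n X Y` means `Ext^n_Λ(X, Y) = 0`. -/
noncomputable def extZero (n : ℕ) (X Y : ModuleCat.{0} Λ) : Prop :=
  letI : HasDerivedCategory (ModuleCat.{0} Λ) := HasDerivedCategory.standard _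
  haveI : HasExt.{1} (ModuleCat.{0} Λ) := hasExt_of_hasDerivedCategory _
  Subsingleton (Abelian.Ext.{1} X Y n)

/-- projective dimension at most `n`, characterized by vanishing of `Ext^{n+1}(M, -)`. -/
noncomputable def pdLE (M : ModuleCat.{0} Λ) (n : ℕ) : Prop :=
  ∀ N : ModuleCat.{0} Λ, extZero Λ (n + 1) M N

noncomputable def pdEq (M : ModuleCat.{0} Λ) (n : ℕ) : Prop :=
  pdLE Λ M n ∧ ∀ m : ℕ, pdLE Λ M m → n ≤ m

/-- injective dimension at most `n`, characterized by vanishing of `Ext^{n+1}(-, M)`. -/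
noncomputable def idLE (M : ModuleCat.{0} Λ) (n : ℕ) : Prop :=
  ∀ N : ModuleCat.{0} Λ, extZero Λ (n + 1) N M

noncomputable def idEq (M : ModuleCat.{0} Λ) (n : ℕ) : Prop :=
  idLE Λ M n ∧ ∀ m : ℕ, idLE Λ M m → n ≤ m

noncomputable def glDimLE (n : ℕ) : Prop := ∀ M : ModuleCat.{0} Λ, pdLE Λ M n

noncomputable def glDimEq (n : ℕ) : Prop :=
  glDimLE Λ n ∧ ∀ m : ℕ, glDimLE Λ m → n ≤ m

section Maps

variable {M N : Type} [AddCommGroup M] [Module Λ M] [AddCommGroup N] [Module Λ N]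

/-- A homomorphism `f : M → N` is left minimal if every `g : N → N` with `g ∘ f = f`
is an automorphism. -/
def IsLeftMinimal (f : M →ₗ[Λ] N) : Prop :=
  ∀ g : N →ₗ[Λ] N, g.comp f = f → Function.Bijective g

/-- A homomorphism `f : M → N` is right minimal if every `h : M → M` with `f ∘ h = f`
is an automorphism. -/
def IsRightMinimal (f : M →ₗ[Λ] N) : Prop :=
  ∀ h : M →ₗ[Λ] M, f.comp h = f → Function.Bijective h

/-- `g, f` form a short exact sequence `0 → A → B → C → 0`. -/
def SES {A B C : Type} [AddCommGroup A] [Module Λ A] [AddCommGroup B] [Module Λ B]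
    [AddCommGroup C] [Module Λ C] (g : A →ₗ[Λ] B) (f : B →ₗ[Λ] C) : Prop :=
  Function.Injective g ∧ Function.Surjective f ∧ LinearMap.range g = LinearMap.ker f

/-- The monomorphism `g : A → B` splits. -/
def Splits {A B : Type} [AddCommGroup A] [Module Λ A] [AddCommGroup B] [Module Λ B]
    (g : A →ₗ[Λ] B) : Prop :=
  ∃ r : B →ₗ[Λ] A, r.comp g = LinearMap.id

/-- `X` is (isomorphic to) a direct summand of `Y`. -/
def IsSummand (X Y : Type) [AddCommGroup X] [Module Λ X] [AddCommGroup Y] [Module Λ Y] :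
    Prop :=
  ∃ (i : X →ₗ[Λ] Y) (p : Y →ₗ[Λ] X), p.comp i = LinearMap.id

/-- An indecomposable module: non-zero, and the only idempotent endomorphisms are `0` and `1`. -/
def Indecomposable (M : Type) [AddCommGroup M] [Module Λ M] : Prop :=
  Nontrivial M ∧ ∀ e : M →ₗ[Λ] M, e.comp e = e → e = 0 ∨ e = LinearMap.id

/-- An essential submodule. -/
def Essential (N : Submodule Λ M) : Prop := ∀ K : Submodule Λ M, K ⊓ N = ⊥ → K = ⊥

/-- A superfluous (small) submodule. -/
def Superfluous (N : Submodule Λ M) : Prop := ∀ K : Submodule Λ M, K ⊔ N = ⊤ → K = ⊤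

/-- `f : M → I` is an injective envelope of `M`. -/
def IsInjEnvelope {I : Type} [AddCommGroup I] [Module Λ I] (f : M →ₗ[Λ] I) : Prop :=
  Module.Injective Λ I ∧ Function.Injective f ∧ Essential Λ (LinearMap.range f)

end Maps

/-- Auslander's 1-Gorenstein: the injective envelope of the left regular module is projective. -/
def AuslanderOneGorenstein : Prop :=
  ∀ (I : ModuleCat.{0} Λ) (f : Λ →ₗ[Λ] I), IsInjEnvelope Λ f → Module.Projective Λ I

/-- membership in `add (Λ ⊕ D(Λ^op))`: direct summands of (finite direct sums of)
finitely generated projective and injective modules. -/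
def InAddProjInj (X : ModuleCat.{0} Λ) : Prop :=
  ∃ (P I : ModuleCat.{0} Λ), Module.Projective Λ P ∧ Module.Finite Λ P ∧
    Module.Injective Λ I ∧ Module.Finite Λ I ∧ IsSummand Λ X (P × I)

/-- `D` is a maximal `n`-orthogonal subcategory of `mod Λ`. -/
noncomputable def IsMaxNOrthogonal (D : ModuleCat.{0} Λ → Prop) (n : ℕ) : Prop :=
  (∀ X, D X → Module.Finite Λ X) ∧
  ∀ X : ModuleCat.{0} Λ, Module.Finite Λ X →
    ((D X ↔ ∀ Y, D Y → ∀ i : ℕ, 1 ≤ i → i ≤ n → extZero Λ i X Y) ∧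
     (D X ↔ ∀ Y, D Y → ∀ i : ℕ, 1 ≤ i → i ≤ n → extZero Λ i Y X))

/-- `Λ` admits the trivial maximal `n`-orthogonal subcategory `add (Λ ⊕ D(Λ^op))`. -/
noncomputable def HasTrivialMaxOrth (n : ℕ) : Prop :=
  IsMaxNOrthogonal Λ (InAddProjInj Λ) n

/-- a right `𝒞`-approximation. -/
def IsRightApprox (C : ModuleCat.{0} Λ → Prop) {X D : ModuleCat.{0} Λ} (f : X ⟶ D) : Prop :=
  C X ∧ ∀ C' : ModuleCat.{0} Λ, C C' → ∀ g : C' ⟶ D, ∃ h : C' ⟶ X, h ≫ f = g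

/-- a left `𝒞`-approximation. -/
def IsLeftApprox (C : ModuleCat.{0} Λ → Prop) {D X : ModuleCat.{0} Λ} (f : D ⟶ X) : Prop :=
  C X ∧ ∀ C' : ModuleCat.{0} Λ, C C' → ∀ g : D ⟶ C', ∃ h : X ⟶ C', f ≫ h = g

/-- A minimal injective resolution `0 → M → I⁰ → I¹ → ⋯`. -/
structure MinInjRes (M : ModuleCat.{0} Λ) where
  I : ℕ → ModuleCat.{0} Λ
  ι : M ⟶ I 0
  d : ∀ i : ℕ, I i ⟶ I (i + 1)
  inj : ∀ i, Module.Injective Λ (I i)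
  mono : Function.Injective ι
  exact0 : LinearMap.range ι.hom = LinearMap.ker (d 0).hom
  exact : ∀ i, LinearMap.range (d i).hom = LinearMap.ker (d (i + 1)).hom
  ess0 : Essential Λ (LinearMap.range ι.hom)
  ess : ∀ i, Essential Λ (LinearMap.range (d i).hom)

/-- A minimal projective resolution `⋯ → P₁ → P₀ → M → 0`. -/
structure MinProjRes (M : ModuleCat.{0} Λ) where
  P : ℕ → ModuleCat.{0} Λ
  π : P 0 ⟶ M
  d : ∀ i : ℕ, P (i + 1) ⟶ P i
  proj : ∀ i, Module.Projective Λ (P i)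
  epi : Function.Surjective π
  exact0 : LinearMap.range (d 0).hom = LinearMap.ker π.hom
  exact : ∀ i, LinearMap.range (d (i + 1)).hom = LinearMap.ker (d i).hom
  sup0 : Superfluous Λ (LinearMap.ker π.hom)
  sup : ∀ i, Superfluous Λ (LinearMap.ker (d i).hom)

/-- The map `Hom(N, Λ) → Hom(M, Λ)` induced by `f : M → N`; it is `Λ^op`-linear. -/
def dualMap {M N : Type} [AddCommGroup M] [Module Λ M] [AddCommGroup N] [Module Λ N]
    (f : M →ₗ[Λ] N) : (N →ₗ[Λ] Λ) →ₗ[Λᵐᵒᵖ] (M →ₗ[Λ] Λ) where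
  toFun g := g.comp f
  map_add' a b := by ext; simp
  map_smul' a b := by ext; simp

/-- `Ext¹_Λ(M, Λ)` as a `Λ^op`-module, computed from a projective resolution of `M`. -/
def ext1C {M : ModuleCat.{0} Λ} (rs : MinProjRes Λ M) : Type :=
  letI : HasQuotient (↥(LinearMap.ker (dualMap Λ (rs.d 1).hom)))
      (Submodule Λᵐᵒᵖ ↥(LinearMap.ker (dualMap Λ (rs.d 1).hom))) :=
      @Submodule.hasQuotient Λᵐᵒᵖ ↥(LinearMap.ker (dualMap Λ (rs.d 1).hom)) _ _ _
  ↥(LinearMap.ker (dualMap Λ (rs.d 1).hom)) ⧸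
    (LinearMap.range (dualMap Λ (rs.d 0).hom)).comap (LinearMap.ker (dualMap Λ (rs.d 1).hom)).subtype

noncomputable instance {M : ModuleCat.{0} Λ} (rs : MinProjRes Λ M) :
    AddCommGroup (ext1C Λ rs) := by unfold ext1C; infer_instance

noncomputable instance {M : ModuleCat.{0} Λ} (rs : MinProjRes Λ M) :
    Module Λᵐᵒᵖ (ext1C Λ rs) := by unfold ext1C; infer_instance

/-- `Ext²_Λ(M, Λ)` as a `Λ^op`-module, computed from a projective resolution of `M`
(assuming `pd M ≤ 2`, so that `P₃* → P₂*` has image `im(P₁* → P₂*)`). -/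
def ext2C {M : ModuleCat.{0} Λ} (rs : MinProjRes Λ M) : Type :=
  letI : HasQuotient (↥(rs.P 2) →ₗ[Λ] Λ) (Submodule Λᵐᵒᵖ (↥(rs.P 2) →ₗ[Λ] Λ)) :=
    Submodule.hasQuotient
  (↥(rs.P 2) →ₗ[Λ] Λ) ⧸ LinearMap.range (dualMap Λ (rs.d 1).hom)

noncomputable instance {M : ModuleCat.{0} Λ} (rs : MinProjRes Λ M) :
    AddCommGroup (ext2C Λ rs) := by unfold ext2C; infer_instance

noncomputable instance {M : ModuleCat.{0} Λ} (rs : MinProjRes Λ M) :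
    Module Λᵐᵒᵖ (ext2C Λ rs) := by unfold ext2C; infer_instance

/-- `X` belongs to `add T`. -/
def InAdd (T : Type) [AddCommGroup T] [Module Λ T] (X : Type) [AddCommGroup X]
    [Module Λ X] : Prop :=
  ∃ n : ℕ, IsSummand Λ X (Fin n → T)

/-- A (classical) tilting module. -/
noncomputable def IsTiltingModule (T : Type) [AddCommGroup T] [Module Λ T] : Prop :=
  Module.Finite Λ T ∧ pdLE Λ (ModuleCat.of Λ T) 1 ∧
    extZero Λ 1 (ModuleCat.of Λ T) (ModuleCat.of Λ T) ∧
    ∃ (T0 T1 : ModuleCat.{0} Λ) (g : Λ →ₗ[Λ] T0) (f : T0 →ₗ[Λ] T1),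
      InAdd Λ T T0 ∧ InAdd Λ T T1 ∧ SES Λ g f

/-- Witness that `Λ` is a tilted algebra: `Λ ≅ End_H(T)` for a tilting module `T` over a
hereditary Artinian algebra `H`. -/
structure TiltedWitness : Type 1 where
  H : Type
  [ringH : Ring H]
  R : Type
  [commR : CommRing R]
  [artR : IsArtinianRing R]
  [algRH : Algebra R H]
  finRH : Module.Finite R H
  hereditary : glDimLE H 1
  T : Type
  [acgT : AddCommGroup T]
  [modT : Module H T]
  tilting : IsTiltingModule H T
  iso : Λ ≃+* Module.End H T

noncomputable def IsTiltedAlgebra : Prop := Nonempty (TiltedWitness Λ)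

/-- An almost hereditary algebra. -/
noncomputable def AlmostHereditary : Prop :=
  glDimLE Λ 2 ∧ ∀ M : ModuleCat.{0} Λ, Module.Finite Λ M → Indecomposable Λ M →
    (pdLE Λ M 1 ∨ idLE Λ M 1)



theorem _root_.CategoryTheory.ShortComplex.ShortExact.exists_lift_of_subsingleton_ext
    {C : Type*} [Category C] [Abelian C] [HasExt C] {S : ShortComplex C} (hS : S.ShortExact)
    {X : C} [Subsingleton (Abelian.Ext X S.X₁ 1)] (u : X ⟶ S.X₃) :
    ∃ v : X ⟶ S.X₂, v ≫ S.g = u := by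
  obtain ⟨x, hx⟩ := Abelian.Ext.covariant_sequence_exact₃ X hS (Abelian.Ext.mk₀ u) rfl
    (Subsingleton.elim _ _)
  obtain ⟨v, rfl⟩ := (Abelian.Ext.mk₀_bijective X S.X₂).2 x
  exact ⟨v, (Abelian.Ext.mk₀_bijective X S.X₃).1 (by rw [← Abelian.Ext.mk₀_comp_mk₀, hx])⟩

section LinearMaps

variable {Λ} {A B C : Type} [AddCommGroup A] [Module Λ A] [AddCommGroup B] [Module Λ B]
  [AddCommGroup C] [Module Λ C] {g : A →ₗ[Λ] B} {f : B →ₗ[Λ] C}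

theorem SES.comp_eq_zero (hses : SES Λ g f) : f ∘ₗ g = 0 := by
  ext a
  exact hses.2.2.le (LinearMap.mem_range_self g a)

theorem SES.shortExact (hses : SES Λ g f) :
    (ShortComplex.moduleCatMk g f hses.comp_eq_zero).ShortExact :=
  .mk' ((ShortComplex.moduleCat_exact_iff_range_eq_ker _).2 hses.2.2)
    ((ModuleCat.mono_iff_injective _).2 hses.1) ((ModuleCat.epi_iff_surjective _).2 hses.2.1)

theorem SES.exists_lift_of_extZero (hses : SES Λ g f) {X : ModuleCat.{0} Λ}
    (hX : extZero Λ 1 X (ModuleCat.of Λ A)) (u : X →ₗ[Λ] C) :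
    ∃ v : X →ₗ[Λ] B, f ∘ₗ v = u := by
  let : HasDerivedCategory (ModuleCat.{0} Λ) := HasDerivedCategory.standard _
  have : HasExt.{1} (ModuleCat.{0} Λ) := hasExt_of_hasDerivedCategory _
  have : Subsingleton (Abelian.Ext.{1} X (ShortComplex.moduleCatMk g f hses.comp_eq_zero).X₁ 1) :=
    hX
  obtain ⟨v, hv⟩ := hses.shortExact.exists_lift_of_subsingleton_ext (X := X) (ModuleCat.ofHom u)
  exact ⟨v.hom, congrArg ModuleCat.Hom.hom hv⟩

/-- `id - s ∘ q` fixes `g`, hence is onto by minimality, while `q` vanishes on its image. -/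
theorem IsLeftMinimal.subsingleton_of_comp_eq_zero {C' : Type} [AddCommGroup C'] [Module Λ C']
    (hmin : IsLeftMinimal Λ g) (q : B →ₗ[Λ] C') (s : C' →ₗ[Λ] B)
    (hqs : q ∘ₗ s = LinearMap.id) (hqg : q ∘ₗ g = 0) : Subsingleton C' := by
  have hfix : (LinearMap.id - s ∘ₗ q) ∘ₗ g = g := by
    rw [LinearMap.sub_comp, LinearMap.comp_assoc, hqg, LinearMap.comp_zero, sub_zero,
      LinearMap.id_comp]
  refine ⟨fun c c' => ?_⟩
  suffices ∀ c : C', c = 0 by rw [this c, this c']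
  intro c
  obtain ⟨b, hb⟩ := (hmin _ hfix).2 (s c)
  calc c = q (s c) := (LinearMap.congr_fun hqs c).symm
    _ = q b - q (s (q b)) := by rw [← hb]; simp
    _ = 0 := by rw [← LinearMap.comp_apply q s, hqs, LinearMap.id_apply, sub_self]

end LinearMaps

theorem statement1_general (Λ : Type) [Ring Λ]
    (A B C : Type) [AddCommGroup A] [Module Λ A]
    [AddCommGroup B] [Module Λ B]
    [AddCommGroup C] [Module Λ C]
    (g : A →ₗ[Λ] B) (f : B →ₗ[Λ] C) (hses : SES Λ g f)
    (hmin : IsLeftMinimal Λ g) :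
    ∀ C' : ModuleCat.{0} Λ, Nontrivial C' → IsSummand Λ C' C →
      ¬ extZero Λ 1 C' (ModuleCat.of Λ A) := by
  rintro C' hnt ⟨i, p, hpi⟩ hext
  obtain ⟨s, hs⟩ := hses.exists_lift_of_extZero hext i
  have hqs : (p ∘ₗ f) ∘ₗ s = LinearMap.id := by rw [LinearMap.comp_assoc, hs, hpi]
  have hqg : (p ∘ₗ f) ∘ₗ g = 0 := by
    rw [LinearMap.comp_assoc, hses.comp_eq_zero, LinearMap.comp_zero]
  exact not_subsingleton C' (hmin.subsingleton_of_comp_eq_zero _ s hqs hqg)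

theorem statement1 (Λ R : Type) [CommRing R] [IsArtinianRing R] [Ring Λ] [Algebra R Λ]
    [Module.Finite R Λ]
    (A B C : Type) [AddCommGroup A] [Module Λ A] [Module.Finite Λ A]
    [AddCommGroup B] [Module Λ B] [Module.Finite Λ B]
    [AddCommGroup C] [Module Λ C] [Module.Finite Λ C]
    (g : A →ₗ[Λ] B) (f : B →ₗ[Λ] C) (hses : SES Λ g f) (hns : ¬ Splits Λ g)
    (hmin : IsLeftMinimal Λ g) :
    ∀ C' : ModuleCat.{0} Λ, Nontrivial C' → IsSummand Λ C' C →
      ¬ extZero Λ 1 C' (ModuleCat.of Λ A) :=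
  statement1_general Λ A B C g f hses hmin

end Paper
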